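/- Let (R, m) be a Cohen-Macaulay local ring of dimension one and I a regular ideal of R. If R : I ⊆ R̄ (i.e. every α in the total quotient ring Q(R) with αI ⊆ R is integral over R), then I is a reduction of tr_R(I); that is, tr_R(I)^{n+1} = I · tr_R(I)^n for some n > 0. -/

import Mathlib

/-!
Inside `K = Q(R)`, write `T = R : I`. A homomorphism `f : I → R` is multiplication by
`f(a)/a` for any non-zerodivisor `a ∈ I`, so `tr(I) = T · I` and `tr(I)^n = T^n I^n`. Since
`1 ∈ T`, the powers `T^n` increase; `T ⊆ R·a⁻¹` is finitely generated, and its generators are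
integral, so all `T^n` lie in one module-finite subalgebra of `K`. Hence the chain stabilizes,
`T^(n+1) = T^n`, which gives `tr(I)^(n+1) = T^n I^(n+1) = I · tr(I)^n`.
-/

/-- The trace ideal `tr_R(M) = Σ_{f ∈ Hom_R(M,R)} Im f`. -/
noncomputable def traceIdeal (R M : Type*) [CommRing R] [AddCommGroup M] [Module R M] : Ideal R :=
  ⨆ f : M →ₗ[R] R, LinearMap.range f

open Submodule IsLocalization

section Colon

variable {R K : Type*} [CommRing R] [CommRing K] [Algebra R K]

theorem mem_one_div_coeSubmodule_iff {I : Ideal R} {α : K} :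
    α ∈ 1 / coeSubmodule K I ↔ ∀ y ∈ I, ∃ r : R, algebraMap R K r = α * algebraMap R K y := by
  simp only [mem_div_iff_forall_mul_mem, coeSubmodule, mem_map, mem_one]
  constructor
  · intro h y hy
    exact h _ ⟨y, hy, rfl⟩
  · rintro h _ ⟨y, hy, rfl⟩
    exact h y hy

theorem one_le_one_div_coeSubmodule (I : Ideal R) : 1 ≤ 1 / coeSubmodule K I :=
  Submodule.one_le_one_div.mpr (coeSubmodule_top (R := R) (S := K) ▸ coeSubmodule_mono K le_top)

theorem exists_linearMap_algebraMap_eq_mul (hinj : Function.Injective (algebraMap R K))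
    {I : Ideal R} {α : K} (hα : α ∈ 1 / coeSubmodule K I) :
    ∃ g : I →ₗ[R] R, ∀ x : I, algebraMap R K (g x) = α * algebraMap R K x := by
  have hmem : ∀ x : I, α * algebraMap R K x ∈ LinearMap.range (Algebra.linearMap R K) := by
    intro x
    rw [← one_eq_range]
    exact mem_div_iff_forall_mul_mem.mp hα _ (mem_map_of_mem x.2)
  let e := LinearEquiv.ofInjective (Algebra.linearMap R K) hinj
  refine ⟨e.symm.toLinearMap ∘ₗ
    (LinearMap.codRestrict _ (LinearMap.mulLeft R α ∘ₗ Algebra.linearMap R K ∘ₗ I.subtype) hmem),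
    fun x => ?_⟩
  -- `↑(e r)` unfolds to `algebraMap R K r`
  exact congrArg Subtype.val (e.apply_symm_apply ⟨_, hmem x⟩)

variable [IsFractionRing R K]

theorem exists_mem_one_div_algebraMap_eq_mul {I : Ideal R} {a : R} (haI : a ∈ I)
    (ha : a ∈ nonZeroDivisors R) (f : I →ₗ[R] R) :
    ∃ α ∈ 1 / coeSubmodule K I, ∀ x : I, algebraMap R K (f x) = α * algebraMap R K x := by
  set α := mk' K (f ⟨a, haI⟩) ⟨a, ha⟩
  have hf : ∀ x : I, algebraMap R K (f x) = α * algebraMap R K x := by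
    intro x
    refine (IsLocalization.map_units K (⟨a, ha⟩ : nonZeroDivisors R)).mul_left_cancel ?_
    have hlin : a * f x = x * f ⟨a, haI⟩ := by
      rw [← smul_eq_mul, ← map_smul, ← smul_eq_mul, ← map_smul]
      congr 1
      ext
      exact mul_comm _ _
    calc algebraMap R K a * algebraMap R K (f x)
        = algebraMap R K x * (α * algebraMap R K a) := by
          rw [← map_mul, hlin, map_mul, mk'_spec]
      _ = algebraMap R K a * (α * algebraMap R K x) := by ring
  exact ⟨α, mem_one_div_coeSubmodule_iff.mpr fun y hy => ⟨f ⟨y, hy⟩, hf ⟨y, hy⟩⟩, hf⟩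

theorem coeSubmodule_traceIdeal {I : Ideal R} {a : R} (haI : a ∈ I)
    (ha : a ∈ nonZeroDivisors R) :
    coeSubmodule K (traceIdeal R I) = 1 / coeSubmodule K I * coeSubmodule K I := by
  rw [traceIdeal, coeSubmodule, Submodule.map_iSup]
  apply le_antisymm
  · refine iSup_le fun f => ?_
    rintro _ ⟨_, ⟨x, rfl⟩, rfl⟩
    obtain ⟨α, hα, hf⟩ := exists_mem_one_div_algebraMap_eq_mul (K := K) haI ha f
    exact (hf x).symm ▸ mul_mem_mul hα (mem_map_of_mem x.2)
  · refine mul_le.mpr fun α hα _ ⟨x, hx, hxy⟩ => ?_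
    obtain ⟨g, hg⟩ := exists_linearMap_algebraMap_eq_mul (IsFractionRing.injective R K) hα
    rw [← hxy]
    exact mem_iSup_of_mem g ((hg ⟨x, hx⟩) ▸ mem_map_of_mem (LinearMap.mem_range_self g _))

theorem fg_one_div_coeSubmodule [IsNoetherianRing R] {I : Ideal R} {a : R} (haI : a ∈ I)
    (ha : a ∈ nonZeroDivisors R) : (1 / coeSubmodule K I).FG := by
  refine (fg_span_singleton (mk' K (1 : R) ⟨a, ha⟩)).of_le fun α hα => ?_
  obtain ⟨r, hr⟩ := mem_one_div_coeSubmodule_iff.mp hα a haI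
  refine mem_span_singleton.mpr ⟨r, ?_⟩
  rw [Algebra.smul_def, hr, mul_assoc, mul_comm (algebraMap R K a), mk'_spec, map_one, mul_one]

end Colon

section Powers

variable {R A : Type*} [CommRing R] [CommRing A] [Algebra R A]

theorem exists_pow_succ_eq_pow_of_le {T B : Submodule R A} [IsNoetherian R B] (hT : 1 ≤ T)
    (hB : ∀ n, T ^ n ≤ B) : ∃ n, 0 < n ∧ T ^ (n + 1) = T ^ n := by
  have : WellFoundedGT (Set.Iic B) := B.mapIic.symm.toOrderEmbedding.wellFoundedGT
  obtain ⟨n, hn⟩ := wellFoundedGT_iff_monotone_chain_condition.mp this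
    ⟨fun k => ⟨T ^ k, hB k⟩, fun _ _ h => pow_le_pow_right' hT h⟩
  exact ⟨n + 1, n.succ_pos,
    congrArg Subtype.val ((hn (n + 2) (by omega)).symm.trans (hn (n + 1) n.le_succ))⟩

theorem pow_le_toSubmodule_of_le {T : Submodule R A} {S : Subalgebra R A}
    (hT : T ≤ Subalgebra.toSubmodule S) : ∀ n, T ^ n ≤ Subalgebra.toSubmodule S
  | 0 => by rw [pow_zero]; exact Submodule.one_le.mpr S.one_mem
  | n + 1 => by
    rw [pow_succ]
    exact mul_le.mpr fun x hx y hy =>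
      S.mul_mem (pow_le_toSubmodule_of_le hT n hx) (hT hy)

theorem exists_pow_succ_eq_pow_of_fg_of_isIntegral [IsNoetherianRing R] {T : Submodule R A}
    (hT1 : 1 ≤ T) (hfg : T.FG) (hint : ∀ x ∈ T, IsIntegral R x) :
    ∃ n, 0 < n ∧ T ^ (n + 1) = T ^ n := by
  obtain ⟨s, rfl⟩ := hfg
  let B := Algebra.adjoin R (s : Set A)
  have : IsNoetherian R B := isNoetherian_of_fg_of_noetherian (Subalgebra.toSubmodule B)
    (fg_adjoin_of_finite s.finite_toSet fun x hx => hint x (subset_span hx))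
  exact exists_pow_succ_eq_pow_of_le hT1
    (pow_le_toSubmodule_of_le (S := B) (span_le.mpr Algebra.subset_adjoin))

end Powers

section Reduction

variable {R K : Type*} [CommRing R] [CommRing K] [Algebra R K]

theorem coeSubmodule_pow (I : Ideal R) (n : ℕ) : coeSubmodule K (I ^ n) = coeSubmodule K I ^ n :=
  Submodule.map_pow I (Algebra.ofId R K) n

theorem exists_traceIdeal_pow_succ_eq_mul_pow [IsNoetherianRing R] [IsFractionRing R K]
    {I : Ideal R} {a : R} (haI : a ∈ I) (ha : a ∈ nonZeroDivisors R)
    (hint : ∀ α ∈ 1 / coeSubmodule K I, IsIntegral R α) :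
    ∃ n : ℕ, 0 < n ∧ traceIdeal R I ^ (n + 1) = I * traceIdeal R I ^ n := by
  obtain ⟨n, hn, hstab⟩ := exists_pow_succ_eq_pow_of_fg_of_isIntegral
    (one_le_one_div_coeSubmodule I) (fg_one_div_coeSubmodule haI ha) hint
  refine ⟨n, hn, IsFractionRing.coeSubmodule_injective R K ?_⟩
  rw [coeSubmodule_mul, coeSubmodule_pow, coeSubmodule_pow, coeSubmodule_traceIdeal haI ha,
    mul_pow, mul_pow, hstab]
  ring

end Reduction

theorem stmt7_general (R : Type*) [CommRing R] [IsNoetherianRing R]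
    (I : Ideal R) (hreg : ∃ x ∈ I, x ∈ nonZeroDivisors R)
    (hcol : ∀ α : FractionRing R,
      (∀ y ∈ I, ∃ r : R,
        algebraMap R (FractionRing R) r = α * algebraMap R (FractionRing R) y) →
      α ∈ integralClosure R (FractionRing R)) :
    ∃ n : ℕ, 0 < n ∧ (traceIdeal R ↥I) ^ (n + 1) = I * (traceIdeal R ↥I) ^ n := by
  obtain ⟨a, haI, ha⟩ := hreg
  exact exists_traceIdeal_pow_succ_eq_mul_pow (K := FractionRing R) haI ha
    fun α hα => hcol α (mem_one_div_coeSubmodule_iff.mp hα)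

/-- Let `(R, m)` be a one-dimensional Cohen-Macaulay local ring and `I` a
regular ideal.  If `R : I ⊆ R̄`, i.e. every `α ∈ Q(R)` with `αI ⊆ R` is integral over `R`,
then `I` is a reduction of `tr_R(I)`: `tr_R(I)^(n+1) = I · tr_R(I)^n` for some `n > 0`. -/
theorem stmt7 (R : Type*) [CommRing R] [IsNoetherianRing R] [IsLocalRing R]
    (hdim : ringKrullDim R = 1)
    (hdepth : ∃ x ∈ IsLocalRing.maximalIdeal R, x ∈ nonZeroDivisors R)
    (I : Ideal R) (hreg : ∃ x ∈ I, x ∈ nonZeroDivisors R)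
    (hcol : ∀ α : FractionRing R,
      (∀ y ∈ I, ∃ r : R,
        algebraMap R (FractionRing R) r = α * algebraMap R (FractionRing R) y) →
      α ∈ integralClosure R (FractionRing R)) :
    ∃ n : ℕ, 0 < n ∧ (traceIdeal R ↥I) ^ (n + 1) = I * (traceIdeal R ↥I) ^ n :=
  stmt7_general R I hreg hcol
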